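/- arXiv:1911.05467 — 2 statements merged into one kernel-verified Lean document; each statement's English description precedes it below -/
import Mathlib

section
/- Let m ≥ 0 be an integer, let N = 2^{m+1} − 1, and let c₀, …, c_N be real numbers. Then there exist real numbers c̃₀, …, c̃_N such that ∑_{j=0}^{N} c_j T_j(x) = ∑_{j=0}^{N} c̃_j Ĥ_j(x) for all real x, and moreover, for every n ≤ N, if c_j = 0 for all j with n < j ≤ N then c̃_j = 0 for all j with n < j ≤ N. -/
/-!
Each `Ĥ_n` is a polynomial of exact degree `n`: it is a product of Chebyshev polynomials whose
degrees add up to `n`. Hence `Ĥ_0, …, Ĥ_i` span the polynomials of degree at most `i`, so `T_i`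
is a combination of `Ĥ_0, …, Ĥ_i` alone. The change of basis is triangular, and a triangular
change of basis preserves trailing zero coefficients.
-/

open scoped Classical

noncomputable section

/-- Chebyshev polynomials of the first kind, as functions `ℝ → ℝ`:
`T 0 x = 1`, `T 1 x = x`, `T (n+2) x = 2x * T (n+1) x - T n x`. -/
def chebT : ℕ → ℝ → ℝ
  | 0, _ => 1
  | 1, x => x
  | n + 2, x => 2 * x * chebT (n + 1) x - chebT n x

/-- Rectified power unit `σ_s(x) = max(0,x)^s`. -/
def repu (s : ℕ) (x : ℝ) : ℝ := (max 0 x) ^ s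

/-- A feed-forward neural network with `L` layers: layer widths `width 0, …, width L`
(`width 0` is the input dimension, `width L` the output dimension), weight matrices
`A k` and bias vectors `b k` for `k = 1, …, L` (entries outside the relevant ranges
are irrelevant). -/
structure Net where
  L : ℕ
  width : ℕ → ℕ
  A : ℕ → ℕ → ℕ → ℝ
  b : ℕ → ℕ → ℝ

namespace Net

/-- The state `x_k` of the network on input `x` with activation `σ`:
`x_0 = x`, `x_{k+1} = σ(A_{k+1} x_k + b_{k+1})` componentwise. -/
def fwd (σ : ℝ → ℝ) (Φ : Net) (x : ℕ → ℝ) : ℕ → ℕ → ℝ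
  | 0 => x
  | k + 1 => fun i =>
      σ ((∑ j ∈ Finset.range (Φ.width k), Φ.A (k + 1) i j * Φ.fwd σ x k j) + Φ.b (k + 1) i)

/-- The realization `R(Φ)(x) = A_L x_{L-1} + b_L` (no activation on the last layer). -/
def realize (σ : ℝ → ℝ) (Φ : Net) (x : ℕ → ℝ) : ℕ → ℝ := fun i =>
  (∑ j ∈ Finset.range (Φ.width (Φ.L - 1)), Φ.A Φ.L i j * Φ.fwd σ x (Φ.L - 1) j) + Φ.b Φ.L i

/-- Number of hidden layers. -/
def hiddenLayers (Φ : Net) : ℕ := Φ.L - 1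

/-- Number of neurons (activation functions): total width of the hidden layers. -/
def neurons (Φ : Net) : ℕ := ∑ k ∈ Finset.Ico 1 Φ.L, Φ.width k

/-- Number of nonzero weights: nonzero entries of all the `A_k` and `b_k`. -/
def nonzeroWeights (Φ : Net) : ℕ :=
  ∑ k ∈ Finset.Icc 1 Φ.L,
    ((((Finset.range (Φ.width k)) ×ˢ (Finset.range (Φ.width (k - 1)))).filter
        (fun p => Φ.A k p.1 p.2 ≠ 0)).card
      + ((Finset.range (Φ.width k)).filter (fun i => Φ.b k i ≠ 0)).card)

end Net

/-- Hierarchical Chebyshev functions: `Ĥ n = T n` for `n = 0,1,2` and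
`Ĥ n (x) = T_{2^m}(x) · Ĥ_{n-2^m}(x)` for `n ≥ 3`, where `m = ⌊log₂ n⌋`. -/
def hierT : ℕ → ℝ → ℝ
  | 0, _ => 1
  | 1, x => x
  | 2, x => chebT 2 x
  | n + 3, x =>
      chebT (2 ^ Nat.log 2 (n + 3)) x * hierT ((n + 3) - 2 ^ Nat.log 2 (n + 3)) x
  decreasing_by
    exact Nat.sub_lt (Nat.succ_pos _) (by positivity)

open Polynomial Finset

lemma chebT_eq_eval : ∀ (n : ℕ) (x : ℝ), chebT n x = (Chebyshev.T ℝ n).eval x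
  | 0, x => by simp [chebT]
  | 1, x => by simp [chebT]
  | n + 2, x => by
      rw [chebT, chebT_eq_eval (n + 1) x, chebT_eq_eval n x]
      push_cast
      simp [Chebyshev.T_add_two]

lemma exists_degree_eq_hierT_eq_eval (n : ℕ) :
    ∃ p : ℝ[X], p.degree = n ∧ ∀ x, hierT n x = p.eval x := by
  induction n using Nat.strong_induction_on with
  | _ n ih =>
  match n, ih with
  | 0, _ => exact ⟨1, by simp, fun x => by simp [hierT]⟩
  | 1, _ => exact ⟨X, by simp, fun x => by simp [hierT]⟩
  | 2, _ =>
    exact ⟨Chebyshev.T ℝ 2, by simp [Chebyshev.degree_T],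
      fun x => by rw [hierT, chebT_eq_eval]; rfl⟩
  | n + 3, ih =>
    set p := 2 ^ Nat.log 2 (n + 3)
    have hp : p ≤ n + 3 := Nat.pow_log_le_self 2 (by omega)
    obtain ⟨q, hq, hqT⟩ := ih (n + 3 - p) (Nat.sub_lt (by omega) (by positivity))
    refine ⟨Chebyshev.T ℝ p * q, ?_, fun x => ?_⟩
    · rw [degree_mul, hq, Chebyshev.degree_T, Int.natAbs_natCast, ← Nat.cast_add,
        Nat.add_sub_cancel' hp]
    · rw [hierT, hqT, chebT_eq_eval, eval_mul]

lemma exists_chebT_eq_sum_hierT :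
    ∃ E : ℕ → ℕ → ℝ, ∀ i x, chebT i x = ∑ j ∈ range (i + 1), E i j * hierT j x := by
  choose P hPdeg hPeval using exists_degree_eq_hierT_eq_eval
  let S : Sequence ℝ := ⟨P, hPdeg⟩
  have hT (i : ℕ) : Chebyshev.T ℝ i ∈ Submodule.span ℝ (S '' Set.Iic i) := by
    rw [S.span_degreeLE fun j _ => (leadingCoeff_ne_zero.mpr (S.ne_zero j)).isUnit, mem_degreeLE,
      Chebyshev.degree_T, Int.natAbs_natCast]
  choose E hEsupp hE using fun i => (Finsupp.mem_span_image_iff_linearCombination ℝ).mp (hT i)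
  refine ⟨fun i => E i, fun i x => ?_⟩
  have hsupp : (E i).support ⊆ range (i + 1) := fun j hj => by
    simpa [Nat.lt_succ_iff] using hEsupp i hj
  rw [chebT_eq_eval, ← hE i, Finsupp.linearCombination_apply, Finsupp.sum_of_support_subset _ hsupp
    (fun j a => a • S j) (fun _ _ => zero_smul ℝ _), eval_finsetSum]
  simp [S, hPeval]

lemma exists_sum_mul_eq_sum_mul_of_triangular {α R : Type*} [CommSemiring R] {f g : ℕ → α → R}
    (E : ℕ → ℕ → R) (hfg : ∀ i x, f i x = ∑ j ∈ range (i + 1), E i j * g j x)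
    (N : ℕ) (c : ℕ → R) :
    ∃ ct : ℕ → R, (∀ x, ∑ j ∈ range (N + 1), c j * f j x = ∑ j ∈ range (N + 1), ct j * g j x) ∧
      ∀ n, (∀ j, n < j → j ≤ N → c j = 0) → ∀ j, n < j → j ≤ N → ct j = 0 := by
  refine ⟨fun j => ∑ i ∈ Icc j N, c i * E i j, fun x => ?_, fun n hc j hnj hjN => ?_⟩
  · simp_rw [hfg, mul_sum, sum_mul, mul_assoc]
    exact sum_comm' fun i j => by simp only [mem_range, mem_Icc]; omega
  · exact sum_eq_zero fun i hi => by
      rw [mem_Icc] at hi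
      rw [hc i (by omega) hi.2, zero_mul]

/-- change of basis from Chebyshev to hierarchical Chebyshev, preserving
the pattern of trailing zero coefficients. -/
theorem stmt_2 (m : ℕ) (c : ℕ → ℝ) :
    ∃ ct : ℕ → ℝ,
      (∀ x : ℝ,
        ∑ j ∈ Finset.range (2 ^ (m + 1) - 1 + 1), c j * chebT j x =
          ∑ j ∈ Finset.range (2 ^ (m + 1) - 1 + 1), ct j * hierT j x) ∧
      ∀ n ≤ 2 ^ (m + 1) - 1,
        (∀ j, n < j → j ≤ 2 ^ (m + 1) - 1 → c j = 0) →
        (∀ j, n < j → j ≤ 2 ^ (m + 1) - 1 → ct j = 0) := by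
  obtain ⟨E, hE⟩ := exists_chebT_eq_sum_hierT
  obtain ⟨ct, hsum, hzero⟩ := exists_sum_mul_eq_sum_mul_of_triangular E hE (2 ^ (m + 1) - 1) c
  exact ⟨ct, hsum, fun n _ => hzero n⟩
end
end

section
/- There exists a constant C > 0 such that for every integer m ≥ 1 there exists a σ₂-network Φ with input dimension N₀ = 1, output dimension 1, exactly m hidden layers each of width 2 (so 2m neurons in total), and at most C·m nonzero weights, whose realization satisfies R(Φ)(x) = T_{2^m}(x) for all real x. -/
open scoped Classical

noncomputable section

/-!
Since `σ₂(t) + σ₂(-t) = t²` and `T_{2n} = 2 T_n² - 1`, a hidden layer of width 2 holding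
`(σ₂(t), σ₂(-t))` with `t = T_{2^k}(x)` is mapped by one affine map and `σ₂` to the layer
holding `(σ₂(t'), σ₂(-t'))` with `t' = T_{2^{k+1}}(x)`. Starting from `t = x` and reading off
`2 (σ₂(t) + σ₂(-t)) - 1` after `m` layers gives `T_{2^m}(x)`, with at most 6 weights per layer.
-/

lemma chebT_eq_eval_T (n : ℕ) (x : ℝ) : chebT n x = (Polynomial.Chebyshev.T ℝ n).eval x := by
  induction n using Nat.twoStepInduction with
  | zero => simp [chebT]
  | one => simp [chebT]
  | more n ih₁ ih₂ =>
    have hcast : ((n + 2 : ℕ) : ℤ) = (n + 1 : ℕ) + 1 := by push_cast; ring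
    rw [hcast, Polynomial.Chebyshev.T_add_one]
    simp [chebT, ih₁, ih₂]

lemma chebT_two_mul (n : ℕ) (x : ℝ) : chebT (2 * n) x = 2 * chebT n x ^ 2 - 1 := by
  simp only [chebT_eq_eval_T, Nat.cast_mul, Nat.cast_ofNat, Polynomial.Chebyshev.T_mul,
    Polynomial.Chebyshev.T_two, Polynomial.eval_comp]
  simp

lemma chebT_two_pow_succ (k : ℕ) (x : ℝ) :
    chebT (2 ^ (k + 1)) x = 2 * chebT (2 ^ k) x ^ 2 - 1 := by
  rw [pow_succ', chebT_two_mul]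

lemma repu_two_add_repu_two_neg (t : ℝ) : repu 2 t + repu 2 (-t) = t ^ 2 := by
  rcases le_total 0 t with h | h <;> simp [repu, h]

lemma sum_range_two_mul_repu_two_neg_one_pow (c t : ℝ) :
    ∑ j ∈ Finset.range 2, c * repu 2 ((-1) ^ j * t) = c * t ^ 2 := by
  simp [Finset.sum_range_succ, ← mul_add, repu_two_add_repu_two_neg]

lemma Net.nonzeroWeights_le_of_width_le (Φ : Net) {w : ℕ} (hw : ∀ k, Φ.width k ≤ w) :
    Φ.nonzeroWeights ≤ Φ.L * (w * w + w) := by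
  have hlayer : ∀ k, (((Finset.range (Φ.width k)) ×ˢ (Finset.range (Φ.width (k - 1)))).filter
        (fun p => Φ.A k p.1 p.2 ≠ 0)).card
      + ((Finset.range (Φ.width k)).filter (fun i => Φ.b k i ≠ 0)).card ≤ w * w + w := by
    intro k
    grw [Finset.card_filter_le, Finset.card_filter_le]
    simp only [Finset.card_product, Finset.card_range]
    grw [hw k, hw (k - 1)]
  calc Φ.nonzeroWeights ≤ (Finset.Icc 1 Φ.L).card • (w * w + w) :=
        Finset.sum_le_card_nsmul _ _ _ fun k _ => hlayer k
    _ = Φ.L * (w * w + w) := by simp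

def chebNet (m : ℕ) : Net where
  L := m + 1
  width k := if k = 0 ∨ k = m + 1 then 1 else 2
  A k i _ := (-1) ^ i * if k = 1 then 1 else 2
  b k i := if k = 1 then 0 else -(-1) ^ i

lemma chebNet_width_of_pos_of_le {m k : ℕ} (hk : 0 < k) (hkm : k ≤ m) :
    (chebNet m).width k = 2 := by
  simp only [chebNet]
  rw [if_neg (by omega)]

lemma chebNet_fwd {m k : ℕ} (hkm : k < m) (x : ℝ) (i : ℕ) :
    (chebNet m).fwd (repu 2) (fun _ => x) (k + 1) i = repu 2 ((-1) ^ i * chebT (2 ^ k) x) := by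
  induction k generalizing i with
  | zero => simp [Net.fwd, chebNet, chebT]
  | succ k ih =>
    rw [Net.fwd, chebNet_width_of_pos_of_le k.succ_pos hkm.le]
    simp_rw [ih (by omega)]
    simp only [chebNet, Nat.add_eq_right, add_eq_zero, one_ne_zero, and_false, if_false]
    rw [sum_range_two_mul_repu_two_neg_one_pow, chebT_two_pow_succ]
    ring_nf

lemma chebNet_realize {m : ℕ} (hm : 1 ≤ m) (x : ℝ) :
    (chebNet m).realize (repu 2) (fun _ => x) 0 = chebT (2 ^ m) x := by
  obtain ⟨n, rfl⟩ : ∃ n, m = n + 1 := ⟨m - 1, by omega⟩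
  have hL : (chebNet (n + 1)).L - 1 = n + 1 := rfl
  rw [Net.realize, hL, chebNet_width_of_pos_of_le n.succ_pos le_rfl]
  simp_rw [chebNet_fwd (Nat.lt_succ_self n)]
  simp only [chebNet, Nat.add_eq_right, add_eq_zero, one_ne_zero, and_false, if_false, pow_zero]
  rw [sum_range_two_mul_repu_two_neg_one_pow, chebT_two_pow_succ]
  ring

lemma chebNet_nonzeroWeights_le (m : ℕ) : (chebNet m).nonzeroWeights ≤ 6 * (m + 1) := by
  have hw : ∀ k, (chebNet m).width k ≤ 2 := fun k => by
    simp only [chebNet]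
    split_ifs <;> norm_num
  simpa [chebNet, mul_comm] using (chebNet m).nonzeroWeights_le_of_width_le hw

/-- `T_{2^m}` is realized by a σ₂-network with `m` hidden layers of width 2
and `O(m)` nonzero weights. -/
theorem stmt_3 :
    ∃ C : ℕ, 0 < C ∧
      ∀ m : ℕ, 1 ≤ m →
        ∃ Φ : Net,
          Φ.L = m + 1 ∧
          Φ.width 0 = 1 ∧
          Φ.width Φ.L = 1 ∧
          (∀ k, 1 ≤ k → k ≤ m → Φ.width k = 2) ∧
          Φ.nonzeroWeights ≤ C * m ∧
          ∀ x : ℝ, Φ.realize (repu 2) (fun _ => x) 0 = chebT (2 ^ m) x := by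
  refine ⟨12, by norm_num, fun m hm => ⟨chebNet m, rfl, by simp [chebNet], by simp [chebNet],
    fun k hk hkm => chebNet_width_of_pos_of_le hk hkm, ?_, chebNet_realize hm⟩⟩
  have := chebNet_nonzeroWeights_le m
  omega
end
end
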